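/- Let n ≥ 1 and let f_n be the cluster-size function at the root of the perfect binary tree of depth n. Then the variance of f_n under π_{1/2,B_n} equals n(n+1)(2n+1)/12; equivalently, Σ_{∅≠A⊆B_n} ⟨f_n, Ψ_A^{1/2,B_n}⟩_{1/2,B_n}² = n(n+1)(2n+1)/12. -/

import Mathlib

open Finset Filter

noncomputable section
open scoped Classical

/-- Edges on the path from the root to vertex `v`, in heap indexing of the infinite binary
tree: the root is `0`, the children of `v` are `2v+1` and `2v+2`, and each non-root vertex
is identified with the edge joining it to its parent `(v−1)/2`. -/
def pathSet : ℕ → Finset ℕ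
  | 0 => ∅
  | (v + 1) => insert (v + 1) (pathSet (v / 2))
decreasing_by exact Nat.lt_succ_of_le (Nat.div_le_self v 2)

/-- The depth of vertex `v`. -/
def depth (v : ℕ) : ℕ := Nat.log2 (v + 1)

/-- The edge set B_n of the perfect binary tree of depth `n` (its vertex set is
{0,…,2^{n+1}−2} and each non-root vertex is identified with the edge to its parent),
so |B_n| = 2^{n+1} − 2. -/
def Eset (n : ℕ) : Finset ℕ := Finset.Icc 1 (2 ^ (n + 1) - 2)

/-- ν_p = √((1-p)/p). -/
def nu (p : ℝ) : ℝ := Real.sqrt ((1 - p) / p)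

/-- Ψ_A^{p,B_n}(x) = Π_{i∈A} x_i ν_p^{x_i}: a configuration is encoded by the set `x` of
open edges; the factor is ν_p when the edge is open (+1) and −ν_p⁻¹ when closed (−1). -/
def PsiT (p : ℝ) (A x : Finset ℕ) : ℝ :=
  ∏ i ∈ A, (if i ∈ x then nu p else -(nu p)⁻¹)

/-- The Bernoulli product measure π_{p,B_n} of the configuration with open-edge set `x`. -/
def piT (p : ℝ) (n : ℕ) (x : Finset ℕ) : ℝ :=
  p ^ x.card * (1 - p) ^ ((Eset n).card - x.card)

/-- The inner product ⟨f,g⟩_{p,B_n} = Σ_{x⊆B_n} f(x) g(x) π_{p,B_n}(x). -/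
def innT (p : ℝ) (n : ℕ) (f g : Finset ℕ → ℝ) : ℝ :=
  ∑ x ∈ (Eset n).powerset, f x * g x * piT p n x

/-- The cluster-size function f_n(x) = Σ_{v∈V_n} Π_{e∈P_v} (1+x_e)/2: the number of
vertices of the depth-n perfect binary tree joined to the root by open edges. -/
def fcl (n : ℕ) (x : Finset ℕ) : ℝ :=
  ∑ v ∈ Finset.range (2 ^ (n + 1) - 1), ∏ e ∈ pathSet v, (if e ∈ x then (1 : ℝ) else 0)

/-- var_p(f_n) = Σ_{∅≠A⊆B_n} ⟨f_n,Ψ_A⟩². -/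
def varT (p : ℝ) (n : ℕ) : ℝ :=
  ∑ A ∈ (Eset n).powerset.filter (fun A => A.Nonempty), (innT p n (fcl n) (PsiT p A)) ^ 2

/-- g_{p,n}(d). -/
def gtree (p : ℝ) (n d : ℕ) : ℝ :=
  if p = 1 / 2 then ((2 : ℝ) ^ (2 * d))⁻¹ * ((n + 1 - d : ℕ) : ℝ) ^ 2
  else p ^ (2 * d) * ((1 - (2 * p) ^ (n + 1 - d)) / (1 - 2 * p)) ^ 2

lemma pathSet_zero : pathSet 0 = ∅ := by rw [pathSet]

lemma pathSet_succ (v : ℕ) : pathSet (v + 1) = insert (v + 1) (pathSet (v / 2)) := by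
  rw [pathSet]

lemma mem_pathSet_bounds : ∀ v, ∀ b ∈ pathSet v, 1 ≤ b ∧ b ≤ v := by
  intro v
  induction v using Nat.strong_induction_on with
  | _ v ih =>
    match v with
    | 0 => simp [pathSet_zero]
    | v + 1 =>
      intro b hb
      rw [pathSet_succ] at hb
      rcases Finset.mem_insert.1 hb with h | h
      · omega
      · have := ih (v / 2) (by omega) b h
        omega

lemma self_mem_pathSet {a : ℕ} (ha : 1 ≤ a) : a ∈ pathSet a := by
  obtain ⟨b, rfl⟩ := Nat.exists_eq_add_of_le ha
  rw [Nat.add_comm, pathSet_succ]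
  exact Finset.mem_insert_self _ _

lemma pathSet_mono : ∀ v a, a ∈ pathSet v → pathSet a ⊆ pathSet v := by
  intro v
  induction v using Nat.strong_induction_on with
  | _ v ih =>
    match v with
    | 0 => simp [pathSet_zero]
    | v + 1 =>
      intro a ha
      rw [pathSet_succ] at ha ⊢
      rcases Finset.mem_insert.1 ha with rfl | h
      · rw [pathSet_succ]
      · exact (ih (v / 2) (by omega) a h).trans (Finset.subset_insert _ _)

lemma mem_pathSet_of_le : ∀ v a b, a ∈ pathSet v → b ∈ pathSet v → b ≤ a → b ∈ pathSet a := by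
  intro v
  induction v using Nat.strong_induction_on with
  | _ v ih =>
    match v with
    | 0 => simp [pathSet_zero]
    | v + 1 =>
      intro a b ha hb hba
      rw [pathSet_succ] at ha hb
      rcases Finset.mem_insert.1 ha with rfl | ha'
      · rwa [pathSet_succ]
      · have haa := mem_pathSet_bounds _ _ ha'
        rcases Finset.mem_insert.1 hb with rfl | hb'
        · omega
        · exact ih (v / 2) (by omega) a b ha' hb' hba

lemma children_not_both : ∀ v a, 2 * a + 1 ∈ pathSet v → 2 * a + 2 ∈ pathSet v → False := by
  intro v
  induction v using Nat.strong_induction_on with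
  | _ v ih =>
    match v with
    | 0 => simp [pathSet_zero]
    | v + 1 =>
      intro a h1 h2
      rw [pathSet_succ] at h1 h2
      rcases Finset.mem_insert.1 h1 with e1 | h1' <;> rcases Finset.mem_insert.1 h2 with e2 | h2'
      · omega
      · have := mem_pathSet_bounds _ _ h2'; omega
      · have := mem_pathSet_bounds _ _ h1'; omega
      · exact ih (v / 2) (by omega) a h1' h2'

lemma mem_pathSet_iff {a : ℕ} (ha : 1 ≤ a) :
    ∀ v, a ∈ pathSet v ↔ v = a ∨ 2 * a + 1 ∈ pathSet v ∨ 2 * a + 2 ∈ pathSet v := by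
  intro v
  induction v using Nat.strong_induction_on with
  | _ v ih =>
    match v with
    | 0 => simp [pathSet_zero]; omega
    | v + 1 =>
      rw [pathSet_succ]
      simp only [Finset.mem_insert]
      rw [ih (v / 2) (by omega)]
      have hv : v / 2 = a ↔ (v + 1 = 2 * a + 1 ∨ v + 1 = 2 * a + 2) := by omega
      rw [hv]
      tauto

lemma card_pathSet : ∀ v, (pathSet v).card = depth v := by
  intro v
  induction v using Nat.strong_induction_on with
  | _ v ih =>
    match v with
    | 0 => simp [pathSet_zero, depth, Nat.log2]; rfl
    | v + 1 =>
      rw [pathSet_succ, Finset.card_insert_of_notMem (fun h => by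
        have := mem_pathSet_bounds _ _ h; omega)]
      rw [ih (v / 2) (by omega)]
      show _ = Nat.log2 (v + 2)
      rw [Nat.log2_def]
      have : (v + 2) / 2 = v / 2 + 1 := by omega
      simp [this, depth]

lemma depth_le_iff {a n : ℕ} : depth a ≤ n ↔ a + 1 < 2 ^ (n + 1) := by
  rw [depth, ← Nat.lt_succ_iff, Nat.log2_lt (by omega)]

lemma depth_eq_iff {a d : ℕ} : depth a = d ↔ 2 ^ d ≤ a + 1 ∧ a + 1 < 2 ^ (d + 1) := by
  rw [depth]
  constructor
  · rintro rfl
    exact ⟨(Nat.le_log2 (by omega)).1 le_rfl, (Nat.log2_lt (by omega)).1 (by omega)⟩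
  · rintro ⟨h1, h2⟩
    have := (Nat.le_log2 (n := a+1) (k := d) (by omega)).2 h1
    have := (Nat.log2_lt (n := a+1) (k := d+1) (by omega)).2 h2
    omega

lemma depth_child1 (a : ℕ) : depth (2 * a + 1) = depth a + 1 := by
  show Nat.log2 (2 * a + 2) = Nat.log2 (a + 1) + 1
  rw [Nat.log2_def]
  simp [show (2 * a + 2) / 2 = a + 1 by omega, show 2 ≤ 2 * a + 2 by omega]

lemma depth_child2 (a : ℕ) : depth (2 * a + 2) = depth a + 1 := by
  show Nat.log2 (2 * a + 3) = Nat.log2 (a + 1) + 1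
  rw [Nat.log2_def]
  simp [show (2 * a + 3) / 2 = a + 1 by omega, show 2 ≤ 2 * a + 3 by omega]

lemma depth_parent {a : ℕ} (ha : 1 ≤ a) : depth ((a - 1) / 2) = depth a - 1 := by
  show Nat.log2 ((a - 1) / 2 + 1) = Nat.log2 (a + 1) - 1
  rw [show Nat.log2 (a+1) = Nat.log2 ((a+1)/2) + 1 from by rw [Nat.log2_def]; simp [show 2 ≤ a + 1 by omega]]
  simp [show (a - 1) / 2 + 1 = (a + 1) / 2 by omega]

lemma depth_pos {a : ℕ} (ha : 1 ≤ a) : 1 ≤ depth a := by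
  rw [depth, Nat.le_log2 (by omega)]; omega

lemma nu_half : nu (1 / 2) = 1 := by
  unfold nu; norm_num

lemma pathSet_subset_Eset {n v : ℕ} (hv : v ∈ Finset.range (2 ^ (n + 1) - 1)) :
    pathSet v ⊆ Eset n := by
  intro b hb
  have hb' := mem_pathSet_bounds v b hb
  simp only [Finset.mem_range] at hv
  have h2 : 1 < 2 ^ (n + 1) := Nat.one_lt_two_pow_iff.2 (by omega)
  simp only [Eset, Finset.mem_Icc]
  omega

lemma prod_ind (s t : Finset ℕ) :
    (∏ e ∈ s, (if e ∈ t then (1 : ℝ) else 0)) = if s ⊆ t then 1 else 0 := by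
  by_cases h : s ⊆ t
  · rw [if_pos h]; exact Finset.prod_eq_one fun e he => if_pos (h he)
  · rw [if_neg h]
    obtain ⟨e, he, het⟩ := Finset.not_subset.1 h
    exact Finset.prod_eq_zero he (if_neg het)

lemma aux_i (E x pv : Finset ℕ) (hpv : pv ⊆ E) :
    (if pv ⊆ x then (1 : ℝ) else 0) = ∏ e ∈ E \ x, (if e ∈ pv then (0 : ℝ) else 1) := by
  by_cases h : pv ⊆ x
  · rw [if_pos h]
    exact (Finset.prod_eq_one fun e he =>
      if_neg fun hep => (Finset.mem_sdiff.1 he).2 (h hep)).symm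
  · rw [if_neg h]
    obtain ⟨e, he, hex⟩ := Finset.not_subset.1 h
    refine (Finset.prod_eq_zero (Finset.mem_sdiff.2 ⟨hpv he, hex⟩) ?_).symm
    exact if_pos he

lemma aux_ii (E x A : Finset ℕ) (hA : A ⊆ E) :
    (∏ i ∈ A, (if i ∈ x then (1 : ℝ) else -1)) =
      ∏ e ∈ E \ x, (if e ∈ A then (-1 : ℝ) else 1) := by
  have h1 : (∏ i ∈ A, (if i ∈ x then (1 : ℝ) else -1)) =
      ∏ i ∈ A.filter (fun i => ¬ i ∈ x), (-1 : ℝ) := by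
    rw [Finset.prod_filter]
    refine Finset.prod_congr rfl fun i _ => ?_
    by_cases h : i ∈ x <;> simp [h]
  have h2 : (∏ e ∈ E \ x, (if e ∈ A then (-1 : ℝ) else 1)) =
      ∏ e ∈ (E \ x).filter (fun e => e ∈ A), (-1 : ℝ) := by
    rw [Finset.prod_filter]
  rw [h1, h2]
  congr 1
  ext e
  simp only [Finset.mem_filter, Finset.mem_sdiff]
  constructor
  · rintro ⟨he, hex⟩; exact ⟨⟨hA he, hex⟩, he⟩
  · rintro ⟨⟨_, hex⟩, he⟩; exact ⟨he, hex⟩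

lemma innT_eq (n : ℕ) (A : Finset ℕ) (hA : A ⊆ Eset n) :
    innT (1 / 2) n (fcl n) (PsiT (1 / 2) A) =
      ∑ v ∈ Finset.range (2 ^ (n + 1) - 1),
        (if A ⊆ pathSet v then ((1 : ℝ) / 2) ^ (pathSet v).card else 0) := by
  unfold innT fcl
  rw [Finset.sum_congr rfl (fun x _ => by rw [Finset.sum_mul, Finset.sum_mul]),
    Finset.sum_comm]
  refine Finset.sum_congr rfl fun v hv => ?_
  have hpv : pathSet v ⊆ Eset n := pathSet_subset_Eset hv
  set E := Eset n with hE
  -- rewrite each term as (∏_{e∈x} 1/2) * (∏_{e∈E\x} g e)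
  have key : ∀ x ∈ E.powerset,
      (∏ e ∈ pathSet v, (if e ∈ x then (1 : ℝ) else 0)) * PsiT (1/2) A x * piT (1/2) n x =
      (∏ _e ∈ x, ((1:ℝ)/2)) * ∏ e ∈ E \ x,
        ((if e ∈ pathSet v then (0:ℝ) else 1) * (if e ∈ A then (-1:ℝ) else 1) * (1/2)) := by
    intro x hx
    have hx' : x ⊆ E := Finset.mem_powerset.1 hx
    have hcard : x.card ≤ E.card := Finset.card_le_card hx'
    have hsd : (E \ x).card = E.card - x.card := by
      rw [Finset.card_sdiff_of_subset hx']
    rw [Finset.prod_mul_distrib, Finset.prod_mul_distrib, Finset.prod_const,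
      Finset.prod_const, hsd]
    rw [prod_ind, ← aux_i E x (pathSet v) hpv]
    have hPsi : PsiT (1/2) A x = ∏ e ∈ E \ x, (if e ∈ A then (-1:ℝ) else 1) := by
      unfold PsiT
      rw [← aux_ii E x A hA]
      refine Finset.prod_congr rfl fun i _ => ?_
      rw [nu_half]; norm_num
    rw [hPsi]
    unfold piT
    rw [show (1 - 1/2 : ℝ) = 1/2 by norm_num]
    ring
  rw [Finset.sum_congr rfl key, ← Finset.prod_add]
  -- now ∏_{e∈E} (1/2 + g e)
  have hpt : ∀ e, ((1:ℝ)/2) + (if e ∈ pathSet v then (0:ℝ) else 1) * (if e ∈ A then (-1:ℝ) else 1) * (1/2)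
      = (if e ∈ pathSet v then (1:ℝ)/2 else if e ∈ A then 0 else 1) := by
    intro e
    by_cases h1 : e ∈ pathSet v <;> by_cases h2 : e ∈ A <;> simp [h1, h2] <;> norm_num
  rw [Finset.prod_congr rfl (fun e _ => hpt e)]
  by_cases hAv : A ⊆ pathSet v
  · rw [if_pos hAv]
    rw [← Finset.prod_subset hpv (fun e heE hev => by
      rw [if_neg hev, if_neg (fun heA => hev (hAv heA))])]
    rw [Finset.prod_congr rfl (fun e hev => if_pos hev), Finset.prod_const]
  · rw [if_neg hAv]
    obtain ⟨e, heA, hev⟩ := Finset.not_subset.1 hAv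
    refine Finset.prod_eq_zero (hA heA) ?_
    rw [if_neg hev, if_pos heA]

lemma sum_path_indicator (n : ℕ) : ∀ m a, 1 ≤ a → 2 ^ (n + 1) - a ≤ m →
    (∑ v ∈ Finset.range (2 ^ (n + 1) - 1),
      (if a ∈ pathSet v then ((1 : ℝ) / 2) ^ (pathSet v).card else 0)) =
    if depth a ≤ n then ((n + 1 - depth a : ℕ) : ℝ) * ((1 : ℝ) / 2) ^ depth a else 0 := by
  have h2 : 1 < 2 ^ (n + 1) := Nat.one_lt_two_pow_iff.2 (by omega)
  intro m
  induction m with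
  | zero =>
    intro a ha hm
    -- a ≥ 2^(n+1), both sides zero
    rw [Finset.sum_eq_zero fun v hv => by
      rw [if_neg]
      intro hmem
      have := mem_pathSet_bounds v a hmem
      simp only [Finset.mem_range] at hv
      omega]
    rw [if_neg (fun hle => by rw [depth_le_iff] at hle; omega)]
  | succ m ih =>
    intro a ha hm
    by_cases hbig : 2 ^ (n + 1) - 1 ≤ a
    · rw [Finset.sum_eq_zero fun v hv => by
        rw [if_neg]
        intro hmem
        have := mem_pathSet_bounds v a hmem
        simp only [Finset.mem_range] at hv
        omega]
      rw [if_neg (fun hle => by rw [depth_le_iff] at hle; omega)]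
    · -- a ≤ 2^(n+1)-2
      have hsplit : ∀ v ∈ Finset.range (2 ^ (n + 1) - 1),
          (if a ∈ pathSet v then ((1 : ℝ) / 2) ^ (pathSet v).card else 0) =
          (if v = a then ((1 : ℝ) / 2) ^ (pathSet v).card else 0) +
          ((if 2 * a + 1 ∈ pathSet v then ((1 : ℝ) / 2) ^ (pathSet v).card else 0) +
           (if 2 * a + 2 ∈ pathSet v then ((1 : ℝ) / 2) ^ (pathSet v).card else 0)) := by
        intro v _
        by_cases h0 : a ∈ pathSet v
        · rcases (mem_pathSet_iff ha v).1 h0 with h | h | h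
          · subst h
            rw [if_pos h0, if_pos rfl,
              if_neg (fun h => by have := mem_pathSet_bounds v _ h; omega),
              if_neg (fun h => by have := mem_pathSet_bounds v _ h; omega)]
            ring
          · rw [if_pos h0, if_pos h,
              if_neg (fun hv => by
                rw [hv] at h; have := mem_pathSet_bounds a _ h; omega),
              if_neg (fun h2' => children_not_both v a h h2')]
            ring
          · rw [if_pos h0, if_pos h,
              if_neg (fun hv => by
                rw [hv] at h; have := mem_pathSet_bounds a _ h; omega),
              if_neg (fun h1' => children_not_both v a h1' h)]
            ring
        · rw [if_neg h0,
            if_neg (fun hv => h0 (by rw [hv]; exact self_mem_pathSet ha)),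
            if_neg (fun h => h0 ((mem_pathSet_iff ha v).2 (Or.inr (Or.inl h)))),
            if_neg (fun h => h0 ((mem_pathSet_iff ha v).2 (Or.inr (Or.inr h))))]
          ring
      rw [Finset.sum_congr rfl hsplit, Finset.sum_add_distrib, Finset.sum_add_distrib,
        Finset.sum_ite_eq' (Finset.range (2 ^ (n + 1) - 1)) a
          (fun v => ((1 : ℝ) / 2) ^ (pathSet v).card),
        if_pos (Finset.mem_range.2 (by omega)),
        ih (2 * a + 1) (by omega) (by omega), ih (2 * a + 2) (by omega) (by omega),
        card_pathSet, depth_child1, depth_child2]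
      have hda : depth a ≤ n := depth_le_iff.2 (by omega)
      rw [if_pos hda]
      by_cases hdn : depth a = n
      · rw [if_neg (fun hc => by omega), hdn]
        have e3 : n + 1 - n = 1 := by omega
        rw [e3]
        norm_num
      · rw [if_pos (show depth a + 1 ≤ n by omega)]
        have e1 : n + 1 - (depth a + 1) = n - depth a := by omega
        have e2 : n + 1 - depth a = (n - depth a) + 1 := by omega
        rw [e1, e2]
        push_cast
        ring

lemma sup_id_mem {A : Finset ℕ} (h : A.Nonempty) : A.sup id ∈ A := by
  have := Finset.max'_mem A h
  rwa [Finset.max'_eq_sup', Finset.sup'_eq_sup] at this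

lemma mem_Eset {n a : ℕ} : a ∈ Eset n ↔ 1 ≤ a ∧ a ≤ 2 ^ (n + 1) - 2 := by
  simp [Eset, Finset.mem_Icc]

lemma pathSet_parent {a : ℕ} (ha : 1 ≤ a) :
    pathSet a = insert a (pathSet ((a - 1) / 2)) := by
  obtain ⟨b, rfl⟩ := Nat.exists_eq_add_of_le ha
  rw [Nat.add_comm, pathSet_succ]
  norm_num

lemma innT_chain {n a : ℕ} {A : Finset ℕ} (hA : A ⊆ Eset n) (haA : a ∈ A)
    (hch : A ⊆ pathSet a) :
    innT (1 / 2) n (fcl n) (PsiT (1 / 2) A) =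
      ((n + 1 - depth a : ℕ) : ℝ) * ((1 : ℝ) / 2) ^ depth a := by
  have haE := mem_Eset.1 (hA haA)
  have h2 : 1 < 2 ^ (n + 1) := Nat.one_lt_two_pow_iff.2 (by omega)
  have hda : depth a ≤ n := depth_le_iff.2 (by omega)
  rw [innT_eq n A hA]
  have hiff : ∀ v, (A ⊆ pathSet v ↔ a ∈ pathSet v) := fun v =>
    ⟨fun h => h haA, fun h => hch.trans (pathSet_mono v a h)⟩
  rw [Finset.sum_congr rfl fun v _ => (by
    by_cases h : a ∈ pathSet v
    · rw [if_pos ((hiff v).2 h), if_pos h]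
    · rw [if_neg (fun h' => h ((hiff v).1 h')), if_neg h] :
    (if A ⊆ pathSet v then ((1:ℝ)/2) ^ (pathSet v).card else 0) =
    (if a ∈ pathSet v then ((1:ℝ)/2) ^ (pathSet v).card else 0))]
  rw [sum_path_indicator n (2 ^ (n + 1)) a (by omega) (by omega), if_pos hda]

lemma innT_nonchain {n : ℕ} {A : Finset ℕ} (hA : A ⊆ Eset n) (hne : A.Nonempty)
    (h : ¬ A ⊆ pathSet (A.sup id)) :
    innT (1 / 2) n (fcl n) (PsiT (1 / 2) A) = 0 := by
  rw [innT_eq n A hA]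
  refine Finset.sum_eq_zero fun v _ => ?_
  rw [if_neg]
  intro hAv
  refine h fun b hb => ?_
  exact mem_pathSet_of_le v (A.sup id) b (hAv (sup_id_mem hne)) (hAv hb)
    (Finset.le_sup (f := id) hb)

lemma sum_sq_Icc : ∀ n : ℕ, (∑ j ∈ Finset.Icc 1 n, (j : ℝ) ^ 2) =
    (n : ℝ) * ((n : ℝ) + 1) * (2 * (n : ℝ) + 1) / 6 := by
  intro n
  induction n with
  | zero => simp
  | succ n ih =>
    rw [Finset.sum_Icc_succ_top (by omega), ih]
    push_cast
    ring

theorem tree_critical_variance' (n : ℕ) :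
    varT (1 / 2) n = (n : ℝ) * ((n : ℝ) + 1) * (2 * (n : ℝ) + 1) / 12 := by
  have h2 : 1 < 2 ^ (n + 1) := Nat.one_lt_two_pow_iff.2 (by omega)
  -- Step 1: restrict to chains
  have step1 : varT (1 / 2) n =
      ∑ A ∈ (Eset n).powerset.filter (fun A => A.Nonempty ∧ A ⊆ pathSet (A.sup id)),
        (innT (1 / 2) n (fcl n) (PsiT (1 / 2) A)) ^ 2 := by
    unfold varT
    refine (Finset.sum_subset (fun A hA => by
      simp only [Finset.mem_filter] at hA ⊢
      exact ⟨hA.1, hA.2.1⟩) ?_).symm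
    intro A hA hA'
    simp only [Finset.mem_filter, Finset.mem_powerset] at hA
    have hch : ¬ A ⊆ pathSet (A.sup id) := fun hch =>
      hA' (by simp only [Finset.mem_filter, Finset.mem_powerset]; exact ⟨hA.1, hA.2, hch⟩)
    rw [innT_nonchain hA.1 hA.2 hch]
    ring
  -- Step 2: bijection with pairs (a, B)
  have step2 : ∑ A ∈ (Eset n).powerset.filter (fun A => A.Nonempty ∧ A ⊆ pathSet (A.sup id)),
      (innT (1 / 2) n (fcl n) (PsiT (1 / 2) A)) ^ 2 =
      ∑ p ∈ (Eset n).sigma (fun a => (pathSet ((a - 1) / 2)).powerset),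
        (((n + 1 - depth p.1 : ℕ) : ℝ) * ((1 : ℝ) / 2) ^ depth p.1) ^ 2 := by
    refine Finset.sum_nbij' (fun A => ⟨A.sup id, A.erase (A.sup id)⟩)
      (fun p => insert p.1 p.2) ?_ ?_ ?_ ?_ ?_
    · intro A hA
      simp only [Finset.mem_filter, Finset.mem_powerset] at hA
      obtain ⟨hAE, hne, hch⟩ := hA
      have hmem : A.sup id ∈ A := sup_id_mem hne
      have ha1 : 1 ≤ A.sup id := (mem_Eset.1 (hAE hmem)).1
      refine Finset.mem_sigma.2 ⟨hAE hmem, Finset.mem_powerset.2 fun b hb => ?_⟩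
      have hb' := Finset.mem_erase.1 hb
      have := hch hb'.2
      rw [pathSet_parent ha1] at this
      exact (Finset.mem_insert.1 this).resolve_left hb'.1
    · intro p hp
      obtain ⟨a, B⟩ := p
      simp only [Finset.mem_sigma, Finset.mem_powerset] at hp
      obtain ⟨haE, hB⟩ := hp
      have ha := mem_Eset.1 haE
      have hBlt : ∀ b ∈ B, b < a := fun b hb => by
        have := mem_pathSet_bounds _ b (hB hb); omega
      have hsup : (insert a B).sup id = a := by
        refine le_antisymm (Finset.sup_le ?_) (Finset.le_sup (f := id) (Finset.mem_insert_self a B))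
        intro b hb
        rcases Finset.mem_insert.1 hb with rfl | hb
        · exact le_rfl
        · exact le_of_lt (hBlt b hb)
      simp only [Finset.mem_filter, Finset.mem_powerset]
      refine ⟨fun b hb => ?_, Finset.insert_nonempty a B, ?_⟩
      · rcases Finset.mem_insert.1 hb with rfl | hb
        · exact haE
        · have hbb := mem_pathSet_bounds _ b (hB hb)
          exact mem_Eset.2 ⟨hbb.1, by omega⟩
      · rw [hsup, pathSet_parent ha.1]
        exact Finset.insert_subset_insert a hB
    · intro A hA
      simp only [Finset.mem_filter, Finset.mem_powerset] at hA
      exact Finset.insert_erase (sup_id_mem hA.2.1)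
    · intro p hp
      obtain ⟨a, B⟩ := p
      simp only [Finset.mem_sigma, Finset.mem_powerset] at hp
      obtain ⟨haE, hB⟩ := hp
      have ha := mem_Eset.1 haE
      have hBlt : ∀ b ∈ B, b < a := fun b hb => by
        have := mem_pathSet_bounds _ b (hB hb); omega
      have hsup : (insert a B).sup id = a := by
        refine le_antisymm (Finset.sup_le ?_) (Finset.le_sup (f := id) (Finset.mem_insert_self a B))
        intro b hb
        rcases Finset.mem_insert.1 hb with rfl | hb
        · exact le_rfl
        · exact le_of_lt (hBlt b hb)
      have herase : (insert a B).erase ((insert a B).sup id) = B := by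
        rw [hsup]
        exact Finset.erase_insert (fun haB => lt_irrefl a (hBlt a haB))
      show (⟨(insert a B).sup id, (insert a B).erase ((insert a B).sup id)⟩ :
        (_ : ℕ) × Finset ℕ) = ⟨a, B⟩
      rw [hsup, Finset.erase_insert (fun haB => lt_irrefl a (hBlt a haB))]
    · intro A hA
      simp only [Finset.mem_filter, Finset.mem_powerset] at hA
      rw [innT_chain hA.1 (sup_id_mem hA.2.1) hA.2.2]
  rw [step1, step2, Finset.sum_sigma]
  -- Step 3: sum over B is a cardinality factor
  have step3 : ∀ a ∈ Eset n,
      (∑ _B ∈ (pathSet ((a - 1) / 2)).powerset,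
        (((n + 1 - depth a : ℕ) : ℝ) * ((1 : ℝ) / 2) ^ depth a) ^ 2) =
      (2 : ℝ) ^ (depth a - 1) * (((n + 1 - depth a : ℕ) : ℝ) * ((1 : ℝ) / 2) ^ depth a) ^ 2 := by
    intro a haE
    have ha := mem_Eset.1 haE
    rw [Finset.sum_const, Finset.card_powerset, card_pathSet, depth_parent ha.1]
    rw [nsmul_eq_mul]
    push_cast
    ring
  rw [Finset.sum_congr rfl step3]
  -- Step 4: group by depth
  have hmap : ∀ a ∈ Eset n, depth a ∈ Finset.Icc 1 n := by
    intro a haE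
    have ha := mem_Eset.1 haE
    exact Finset.mem_Icc.2 ⟨depth_pos ha.1, depth_le_iff.2 (by omega)⟩
  rw [← Finset.sum_fiberwise_of_maps_to hmap]
  have step4 : ∀ d ∈ Finset.Icc 1 n,
      (∑ a ∈ (Eset n).filter (fun a => depth a = d),
        (2 : ℝ) ^ (depth a - 1) * (((n + 1 - depth a : ℕ) : ℝ) * ((1 : ℝ) / 2) ^ depth a) ^ 2) =
      ((n + 1 - d : ℕ) : ℝ) ^ 2 / 2 := by
    intro d hd
    have hd' := Finset.mem_Icc.1 hd
    have h2d : 1 < 2 ^ d := Nat.one_lt_two_pow_iff.2 (by omega)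
    have hdd : (2:ℕ) ^ (d + 1) = 2 * 2 ^ d := by rw [pow_succ]; ring
    have hmono : (2:ℕ) ^ (d + 1) ≤ 2 ^ (n + 1) := Nat.pow_le_pow_right (by omega) (by omega)
    have hfil : (Eset n).filter (fun a => depth a = d) =
        Finset.Icc (2 ^ d - 1) (2 ^ (d + 1) - 2) := by
      ext a
      simp only [Finset.mem_filter, mem_Eset, Finset.mem_Icc, depth_eq_iff]
      omega
    rw [Finset.sum_congr hfil (fun a ha => by
      have : depth a = d := by
        rw [← hfil] at ha
        exact (Finset.mem_filter.1 ha).2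
      rw [this])]
    rw [Finset.sum_const, Nat.card_Icc, nsmul_eq_mul]
    have hcard : 2 ^ (d + 1) - 2 + 1 - (2 ^ d - 1) = 2 ^ d := by omega
    rw [hcard]
    have hpow : ((2:ℝ) ^ d) * 2 ^ (d - 1) * (((1:ℝ)/2) ^ d) ^ 2 = 1 / 2 := by
      have h1 : (2:ℝ) ^ d = 2 * 2 ^ (d - 1) := by
        rw [← pow_succ']
        congr 1
        omega
      have h0 : (2:ℝ) ^ (d - 1) ≠ 0 := by positivity
      rw [h1, one_div, inv_pow, h1]
      field_simp
    push_cast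
    calc ((2:ℝ) ^ d) * ((2:ℝ) ^ (d - 1) * (((n + 1 - d : ℕ) : ℝ) * ((1:ℝ)/2) ^ d) ^ 2)
        = ((2:ℝ) ^ d) * 2 ^ (d - 1) * (((1:ℝ)/2) ^ d) ^ 2 * (((n + 1 - d : ℕ) : ℝ)) ^ 2 := by ring
      _ = ((n + 1 - d : ℕ) : ℝ) ^ 2 / 2 := by rw [hpow]; ring
  rw [Finset.sum_congr rfl step4]
  -- Step 5: reindex and evaluate
  have step5 : (∑ d ∈ Finset.Icc 1 n, ((n + 1 - d : ℕ) : ℝ) ^ 2 / 2) =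
      (∑ j ∈ Finset.Icc 1 n, (j : ℝ) ^ 2) / 2 := by
    rw [Finset.sum_div]
    refine Finset.sum_nbij' (fun d => n + 1 - d) (fun j => n + 1 - j) ?_ ?_ ?_ ?_ ?_
    · intro d hd; simp only [Finset.mem_Icc] at *; omega
    · intro j hj; simp only [Finset.mem_Icc] at *; omega
    · intro d hd; simp only [Finset.mem_Icc] at hd; show n + 1 - (n + 1 - d) = d; omega
    · intro j hj; simp only [Finset.mem_Icc] at hj; show n + 1 - (n + 1 - j) = j; omega
    · intro d hd; rfl
  rw [step5, sum_sq_Icc]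
  ring

/-- the variance of the cluster size at the root of the perfect binary tree
of depth n under π_{1/2,B_n} equals n(n+1)(2n+1)/12, i.e.
Σ_{∅≠A⊆B_n} ⟨f_n,Ψ_A^{1/2,B_n}⟩² = n(n+1)(2n+1)/12. -/
theorem tree_critical_variance (n : ℕ) (hn : 1 ≤ n) :
    varT (1 / 2) n = (n : ℝ) * ((n : ℝ) + 1) * (2 * (n : ℝ) + 1) / 12 :=
  tree_critical_variance' n

end
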